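/- arXiv:2405.15991 — 2 statements merged into one kernel-verified Lean document; each statement's English description precedes it below -/
import Mathlib

section
/- The Rényi variational lower bound L_α(q) = (1/(1−α)) log E_{z∼q}[(p(y,z)/q(z))^{1−α}] is continuous and non-increasing as a function of α on the set {α : |L_α| < ∞}. -/
open MeasureTheory Real Set Filter Topology

namespace RenyiAux

lemma convexOn_rpow_exp {x : ℝ} (hx : 0 < x) : ConvexOn ℝ univ (fun t : ℝ => x ^ t) := by
  have h : (fun t : ℝ => x ^ t) = fun t : ℝ => Real.exp (Real.log x * t) := by
    funext t; rw [Real.rpow_def_of_pos hx]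
  rw [h]
  refine ⟨convex_univ, fun a _ b _ wa wb hwa hwb hw => ?_⟩
  have h2 := convexOn_exp.2 (mem_univ (Real.log x * a)) (mem_univ (Real.log x * b)) hwa hwb hw
  simp only [smul_eq_mul] at h2 ⊢
  convert h2 using 2
  ring

lemma rpow_slope_mono {x s t : ℝ} (hx : 0 < x) (hs : s ≠ 0) (ht : t ≠ 0) (hst : s ≤ t) :
    (x ^ s - 1) / s ≤ (x ^ t - 1) / t := by
  have h := (convexOn_rpow_exp hx).secant_mono (mem_univ 0) (mem_univ s) (mem_univ t) hs ht hst
  simpa [Real.rpow_zero] using h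

lemma log_le_rpow_slope {x t : ℝ} (hx : 0 < x) (ht : 0 < t) :
    Real.log x ≤ (x ^ t - 1) / t := by
  rw [le_div_iff₀ ht]
  have h := Real.add_one_le_exp (Real.log x * t)
  rw [Real.rpow_def_of_pos hx]
  linarith

lemma rpow_slope_le_log {x t : ℝ} (hx : 0 < x) (ht : t < 0) :
    (x ^ t - 1) / t ≤ Real.log x := by
  rw [div_le_iff_of_neg ht]
  have h := Real.add_one_le_exp (Real.log x * t)
  rw [Real.rpow_def_of_pos hx]
  linarith

lemma rpow_le_add_rpow {x a t b : ℝ} (hx : 0 < x) (hat : a ≤ t) (htb : t ≤ b) :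
    x ^ t ≤ x ^ a + x ^ b := by
  rcases le_total 1 x with h | h
  · have h1 := Real.rpow_le_rpow_of_exponent_le h htb
    have h2 : 0 ≤ x ^ a := Real.rpow_nonneg hx.le a
    linarith
  · have h1 := Real.rpow_le_rpow_of_exponent_ge hx h hat
    have h2 : 0 ≤ x ^ b := Real.rpow_nonneg hx.le b
    linarith

lemma amgm_scaled {x y c d w : ℝ} (hx : 0 ≤ x) (hy : 0 ≤ y) (hc : 0 < c) (hd : 0 < d)
    (hw0 : 0 ≤ w) (hw1 : w ≤ 1) :
    x ^ w * y ^ (1 - w) ≤ c ^ w * d ^ (1 - w) * (w * (x / c) + (1 - w) * (y / d)) := by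
  have h : (x / c) ^ w * (y / d) ^ (1 - w) ≤ w * (x / c) + (1 - w) * (y / d) :=
    Real.geom_mean_le_arith_mean2_weighted hw0 (by linarith)
      (div_nonneg hx hc.le) (div_nonneg hy hd.le) (by ring)
  have hcd : (0:ℝ) < c ^ w * d ^ (1 - w) := by positivity
  have heq : x ^ w * y ^ (1 - w) = c ^ w * d ^ (1 - w) * ((x / c) ^ w * (y / d) ^ (1 - w)) := by
    rw [Real.div_rpow hx hc.le, Real.div_rpow hy hd.le]
    have h1 : c ^ w ≠ 0 := ne_of_gt (by positivity)
    have h2 : d ^ (1 - w) ≠ 0 := ne_of_gt (by positivity)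
    field_simp
  rw [heq]
  exact mul_le_mul_of_nonneg_left h hcd.le

-- the extended function log x / (x-1), and its continuity at 1
noncomputable def phi (x : ℝ) : ℝ := if x = 1 then 1 else Real.log x / (x - 1)

lemma phi_tendsto : Tendsto phi (𝓝 1) (𝓝 1) := by
  unfold phi
  nth_rewrite 1 [← nhdsNE_sup_pure (1:ℝ)]
  rw [Filter.tendsto_sup]
  constructor
  · have h := hasDerivAt_iff_tendsto_slope.mp (Real.hasDerivAt_log one_ne_zero)
    simp only [inv_one] at h
    refine h.congr' ?_
    filter_upwards [self_mem_nhdsWithin] with x hx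
    simp only [mem_compl_iff, mem_singleton_iff] at hx
    rw [slope_def_field, if_neg hx, Real.log_one, sub_zero]
  · simp only [Filter.tendsto_pure_left, if_pos rfl]
    intro s hs
    exact mem_of_mem_nhds hs


section Measure

variable {Z : Type*} [MeasurableSpace Z] {μ : Measure Z} {p q : Z → ℝ}

lemma meas_integrand (hqmeas : Measurable q) (hpmeas : Measurable p) (t : ℝ) :
    AEStronglyMeasurable (fun z => q z * (p z / q z) ^ t) μ := by
  apply Measurable.aestronglyMeasurable
  measurability

lemma q_integrable (hqprob : ∫ z, q z ∂μ = 1) : Integrable q μ := by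
  by_contra h
  rw [integral_undef h] at hqprob
  exact one_ne_zero hqprob.symm

lemma dichotomy (hq0 : ∀ z, 0 ≤ q z) (hp0 : ∀ z, 0 ≤ p z)
    (hac : ∀ z, p z = 0 → q z = 0) (z : Z) :
    q z = 0 ∨ (0 < q z ∧ 0 < p z / q z) := by
  rcases (hq0 z).eq_or_lt with h | h
  · exact Or.inl h.symm
  · refine Or.inr ⟨h, div_pos ?_ h⟩
    rcases (hp0 z).eq_or_lt with hp | hp
    · exact absurd (hac z hp.symm) (ne_of_gt h)
    · exact hp

lemma int_zero (hqprob : ∫ z, q z ∂μ = 1) :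
    Integrable (fun z => q z * (p z / q z) ^ (0:ℝ)) μ := by
  simp only [Real.rpow_zero, mul_one]
  exact q_integrable hqprob

lemma G_zero (hqprob : ∫ z, q z ∂μ = 1) :
    ∫ z, q z * (p z / q z) ^ (0:ℝ) ∂μ = 1 := by
  simp only [Real.rpow_zero, mul_one]
  exact hqprob

lemma G_tendsto_Icc (hq0 : ∀ z, 0 ≤ q z) (hp0 : ∀ z, 0 ≤ p z)
    (hqmeas : Measurable q) (hpmeas : Measurable p) (hac : ∀ z, p z = 0 → q z = 0)
    {t0 t1 t2 : ℝ} (h10 : t1 ≤ t0) (h02 : t0 ≤ t2)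
    (h1 : Integrable (fun z => q z * (p z / q z) ^ t1) μ)
    (h2 : Integrable (fun z => q z * (p z / q z) ^ t2) μ) :
    Tendsto (fun t => ∫ z, q z * (p z / q z) ^ t ∂μ) (𝓝[Icc t1 t2] t0)
      (𝓝 (∫ z, q z * (p z / q z) ^ t0 ∂μ)) := by
  apply tendsto_integral_filter_of_dominated_convergence
    (bound := fun z => q z * (p z / q z) ^ t1 + q z * (p z / q z) ^ t2)
  · exact Eventually.of_forall fun t => meas_integrand hqmeas hpmeas t
  · filter_upwards [self_mem_nhdsWithin] with t ht
    apply ae_of_all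
    intro z
    rcases dichotomy hq0 hp0 hac z with hz | ⟨hqz, hwz⟩
    · simp [hz]
    · rw [Real.norm_eq_abs, abs_of_nonneg (mul_nonneg (hq0 z) (Real.rpow_nonneg hwz.le t))]
      have hb := rpow_le_add_rpow hwz ht.1 ht.2
      nlinarith [hqz.le]
  · exact h1.add h2
  · apply ae_of_all
    intro z
    rcases dichotomy hq0 hp0 hac z with hz | ⟨hqz, hwz⟩
    · simp only [hz, zero_mul]
      exact tendsto_const_nhds
    · have hcont : Continuous fun t : ℝ => q z * (p z / q z) ^ t := by
        have h : (fun t : ℝ => q z * (p z / q z) ^ t)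
            = fun t => q z * Real.exp (Real.log (p z / q z) * t) := by
          funext t; rw [Real.rpow_def_of_pos hwz]
        rw [h]
        fun_prop
      exact (hcont.tendsto t0).mono_left nhdsWithin_le_nhds

lemma G_cwa (hq0 : ∀ z, 0 ≤ q z) (hp0 : ∀ z, 0 ≤ p z)
    (hqmeas : Measurable q) (hpmeas : Measurable p) (hac : ∀ z, p z = 0 → q z = 0)
    {t0 : ℝ} (ht0 : Integrable (fun z => q z * (p z / q z) ^ t0) μ) :
    ContinuousWithinAt (fun t => ∫ z, q z * (p z / q z) ^ t ∂μ)
      {t : ℝ | Integrable (fun z => q z * (p z / q z) ^ t) μ} t0 := by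
  set T := {t : ℝ | Integrable (fun z => q z * (p z / q z) ^ t) μ} with hT
  have hsub : T ⊆ (T ∩ Iic t0) ∪ (T ∩ Ici t0) := fun t ht =>
    (le_total t t0).imp (fun h => ⟨ht, h⟩) fun h => ⟨ht, h⟩
  refine (ContinuousWithinAt.union ?_ ?_).mono hsub
  · rcases eq_empty_or_nonempty (T ∩ Iio t0) with he | ⟨t1, ht1T, ht1⟩
    · refine continuousWithinAt_singleton.mono ?_
      rintro t ⟨htT, hle⟩
      rcases (show t ≤ t0 from hle).lt_or_eq with h | h
      · exact absurd (he ▸ (⟨htT, h⟩ : t ∈ T ∩ Iio t0)) (Set.notMem_empty t)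
      · exact h
    · have key := G_tendsto_Icc hq0 hp0 hqmeas hpmeas hac (le_of_lt ht1) le_rfl ht1T ht0
        (t2 := t0)
      refine key.mono_left ?_
      have heq : 𝓝[T ∩ Iic t0] t0 = 𝓝[(T ∩ Iic t0) ∩ Ioi t1] t0 :=
        (nhdsWithin_inter_of_mem' (mem_nhdsWithin_of_mem_nhds (Ioi_mem_nhds ht1))).symm
      rw [heq]
      exact nhdsWithin_mono _ fun t ht => ⟨le_of_lt ht.2, ht.1.2⟩
  · rcases eq_empty_or_nonempty (T ∩ Ioi t0) with he | ⟨t2, ht2T, ht2⟩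
    · refine continuousWithinAt_singleton.mono ?_
      rintro t ⟨htT, hle⟩
      rcases (show t0 ≤ t from hle).lt_or_eq with h | h
      · exact absurd (he ▸ (⟨htT, h⟩ : t ∈ T ∩ Ioi t0)) (Set.notMem_empty t)
      · exact h.symm
    · have key := G_tendsto_Icc hq0 hp0 hqmeas hpmeas hac le_rfl (le_of_lt ht2) ht0 ht2T
        (t1 := t0)
      refine key.mono_left ?_
      have heq : 𝓝[T ∩ Ici t0] t0 = 𝓝[(T ∩ Ici t0) ∩ Iio t2] t0 :=
        (nhdsWithin_inter_of_mem' (mem_nhdsWithin_of_mem_nhds (Iio_mem_nhds ht2))).symm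
      rw [heq]
      exact nhdsWithin_mono _ fun t ht => ⟨ht.1.2, le_of_lt ht.2⟩


lemma K_tendsto_right (hq0 : ∀ z, 0 ≤ q z) (hp0 : ∀ z, 0 ≤ p z)
    (hqmeas : Measurable q) (hpmeas : Measurable p) (hac : ∀ z, p z = 0 → q z = 0)
    (hqprob : ∫ z, q z ∂μ = 1)
    {t2 : ℝ} (ht2pos : 0 < t2)
    (h2 : Integrable (fun z => q z * (p z / q z) ^ t2) μ)
    (hlog : Integrable (fun z => q z * Real.log (p z / q z)) μ) :
    Tendsto (fun t => ∫ z, (q z * (p z / q z) ^ t - q z) / t ∂μ) (𝓝[Ioc 0 t2] 0)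
      (𝓝 (∫ z, q z * Real.log (p z / q z) ∂μ)) := by
  apply tendsto_integral_filter_of_dominated_convergence
    (bound := fun z => |q z * Real.log (p z / q z)| + |(q z * (p z / q z) ^ t2 - q z) / t2|)
  · apply Eventually.of_forall
    intro t
    apply Measurable.aestronglyMeasurable
    measurability
  · filter_upwards [self_mem_nhdsWithin] with t ht
    apply ae_of_all
    intro z
    rcases dichotomy hq0 hp0 hac z with hz | ⟨hqz, hwz⟩
    · simp [hz]
    · have hlow : q z * Real.log (p z / q z) ≤ (q z * (p z / q z) ^ t - q z) / t := by
        have h := log_le_rpow_slope hwz ht.1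
        have h' := mul_le_mul_of_nonneg_left h hqz.le
        calc q z * Real.log (p z / q z) ≤ q z * (((p z / q z) ^ t - 1) / t) := h'
          _ = (q z * (p z / q z) ^ t - q z) / t := by ring
      have hup : (q z * (p z / q z) ^ t - q z) / t
          ≤ (q z * (p z / q z) ^ t2 - q z) / t2 := by
        have h := rpow_slope_mono hwz (ne_of_gt ht.1) (ne_of_gt ht2pos) ht.2
        have h' := mul_le_mul_of_nonneg_left h hqz.le
        calc (q z * (p z / q z) ^ t - q z) / t = q z * (((p z / q z) ^ t - 1) / t) := by ring
          _ ≤ q z * (((p z / q z) ^ t2 - 1) / t2) := h'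
          _ = (q z * (p z / q z) ^ t2 - q z) / t2 := by ring
      rw [Real.norm_eq_abs, abs_le]
      constructor
      · have := neg_abs_le (q z * Real.log (p z / q z))
        have h0 := abs_nonneg ((q z * (p z / q z) ^ t2 - q z) / t2)
        linarith
      · have := le_abs_self ((q z * (p z / q z) ^ t2 - q z) / t2)
        have h0 := abs_nonneg (q z * Real.log (p z / q z))
        linarith
  · exact hlog.abs.add ((h2.sub (q_integrable hqprob)).div_const t2).abs
  · apply ae_of_all
    intro z
    rcases dichotomy hq0 hp0 hac z with hz | ⟨hqz, hwz⟩
    · simp only [hz, zero_mul, sub_self, zero_div]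
      exact tendsto_const_nhds
    · have hd : HasDerivAt (fun t : ℝ => q z * (p z / q z) ^ t)
          (q z * Real.log (p z / q z)) 0 := by
        have h0 := (Real.hasStrictDerivAt_const_rpow hwz 0).hasDerivAt
        have h1 := h0.const_mul (q z)
        simpa using h1
      have hs := hasDerivAt_iff_tendsto_slope.mp hd
      have hmono : 𝓝[Ioc (0:ℝ) t2] 0 ≤ 𝓝[≠] (0:ℝ) :=
        nhdsWithin_mono _ fun t ht => ne_of_gt ht.1
      refine (hs.mono_left hmono).congr fun t => ?_
      rw [slope_def_field, Real.rpow_zero, mul_one, sub_zero]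

lemma K_tendsto_left (hq0 : ∀ z, 0 ≤ q z) (hp0 : ∀ z, 0 ≤ p z)
    (hqmeas : Measurable q) (hpmeas : Measurable p) (hac : ∀ z, p z = 0 → q z = 0)
    (hqprob : ∫ z, q z ∂μ = 1)
    {t1 : ℝ} (ht1neg : t1 < 0)
    (h1 : Integrable (fun z => q z * (p z / q z) ^ t1) μ)
    (hlog : Integrable (fun z => q z * Real.log (p z / q z)) μ) :
    Tendsto (fun t => ∫ z, (q z * (p z / q z) ^ t - q z) / t ∂μ) (𝓝[Ico t1 0] 0)
      (𝓝 (∫ z, q z * Real.log (p z / q z) ∂μ)) := by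
  apply tendsto_integral_filter_of_dominated_convergence
    (bound := fun z => |q z * Real.log (p z / q z)| + |(q z * (p z / q z) ^ t1 - q z) / t1|)
  · apply Eventually.of_forall
    intro t
    apply Measurable.aestronglyMeasurable
    measurability
  · filter_upwards [self_mem_nhdsWithin] with t ht
    apply ae_of_all
    intro z
    rcases dichotomy hq0 hp0 hac z with hz | ⟨hqz, hwz⟩
    · simp [hz]
    · have hup : (q z * (p z / q z) ^ t - q z) / t ≤ q z * Real.log (p z / q z) := by
        have h := rpow_slope_le_log hwz ht.2
        have h' := mul_le_mul_of_nonneg_left h hqz.le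
        calc (q z * (p z / q z) ^ t - q z) / t = q z * (((p z / q z) ^ t - 1) / t) := by ring
          _ ≤ q z * Real.log (p z / q z) := h'
      have hlow : (q z * (p z / q z) ^ t1 - q z) / t1
          ≤ (q z * (p z / q z) ^ t - q z) / t := by
        have h := rpow_slope_mono hwz (ne_of_lt ht1neg) (ne_of_lt ht.2) ht.1
        have h' := mul_le_mul_of_nonneg_left h hqz.le
        calc (q z * (p z / q z) ^ t1 - q z) / t1 = q z * (((p z / q z) ^ t1 - 1) / t1) := by
              ring
          _ ≤ q z * (((p z / q z) ^ t - 1) / t) := h'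
          _ = (q z * (p z / q z) ^ t - q z) / t := by ring
      rw [Real.norm_eq_abs, abs_le]
      constructor
      · have := neg_abs_le ((q z * (p z / q z) ^ t1 - q z) / t1)
        have h0 := abs_nonneg (q z * Real.log (p z / q z))
        linarith
      · have := le_abs_self (q z * Real.log (p z / q z))
        have h0 := abs_nonneg ((q z * (p z / q z) ^ t1 - q z) / t1)
        linarith
  · exact hlog.abs.add ((h1.sub (q_integrable hqprob)).div_const t1).abs
  · apply ae_of_all
    intro z
    rcases dichotomy hq0 hp0 hac z with hz | ⟨hqz, hwz⟩
    · simp only [hz, zero_mul, sub_self, zero_div]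
      exact tendsto_const_nhds
    · have hd : HasDerivAt (fun t : ℝ => q z * (p z / q z) ^ t)
          (q z * Real.log (p z / q z)) 0 := by
        have h0 := (Real.hasStrictDerivAt_const_rpow hwz 0).hasDerivAt
        have h1' := h0.const_mul (q z)
        simpa using h1'
      have hs := hasDerivAt_iff_tendsto_slope.mp hd
      have hmono : 𝓝[Ico t1 (0:ℝ)] 0 ≤ 𝓝[≠] (0:ℝ) :=
        nhdsWithin_mono _ fun t ht => ne_of_lt ht.2
      refine (hs.mono_left hmono).congr fun t => ?_
      rw [slope_def_field, Real.rpow_zero, mul_one, sub_zero]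


lemma powmean (hq0 : ∀ z, 0 ≤ q z) (hp0 : ∀ z, 0 ≤ p z)
    (hac : ∀ z, p z = 0 → q z = 0) (hqprob : ∫ z, q z ∂μ = 1)
    {s t θ : ℝ} (ht : t ≠ 0) (hθ0 : 0 < θ) (hθ1 : θ < 1) (hst : s = θ * t)
    (hT : Integrable (fun z => q z * (p z / q z) ^ t) μ)
    (hTs : Integrable (fun z => q z * (p z / q z) ^ s) μ)
    (hpos : 0 < ∫ z, q z * (p z / q z) ^ t ∂μ) :
    ∫ z, q z * (p z / q z) ^ s ∂μ ≤ (∫ z, q z * (p z / q z) ^ t ∂μ) ^ θ := by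
  have hqint : Integrable q μ := q_integrable hqprob
  set c := ∫ z, q z * (p z / q z) ^ t ∂μ with hc
  have key : ∀ z, q z * (p z / q z) ^ s
      ≤ (c ^ θ * θ / c) * (q z * (p z / q z) ^ t) + (c ^ θ * (1 - θ)) * q z := by
    intro z
    rcases dichotomy hq0 hp0 hac z with hz | ⟨hqz, hwz⟩
    · simp only [hz, zero_mul, mul_zero, add_zero, le_refl]
    · have h1 : (p z / q z) ^ s = ((p z / q z) ^ t) ^ θ * (1:ℝ) ^ (1 - θ) := by
        rw [Real.one_rpow, mul_one, ← Real.rpow_mul hwz.le, mul_comm t θ, hst]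
      have h2 := amgm_scaled (Real.rpow_nonneg hwz.le t) zero_le_one hpos one_pos
        hθ0.le hθ1.le
      rw [h1]
      calc q z * (((p z / q z) ^ t) ^ θ * (1:ℝ) ^ (1 - θ))
          ≤ q z * (c ^ θ * (1:ℝ) ^ (1 - θ) * (θ * ((p z / q z) ^ t / c) + (1 - θ) * (1 / 1))) :=
            mul_le_mul_of_nonneg_left h2 hqz.le
        _ = (c ^ θ * θ / c) * (q z * (p z / q z) ^ t) + (c ^ θ * (1 - θ)) * q z := by
            rw [Real.one_rpow]; ring
  have hIr : Integrable
      (fun z => (c ^ θ * θ / c) * (q z * (p z / q z) ^ t) + (c ^ θ * (1 - θ)) * q z) μ :=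
    (hT.const_mul _).add (hqint.const_mul _)
  have hmono := integral_mono hTs hIr key
  have hcalc : ∫ z, ((c ^ θ * θ / c) * (q z * (p z / q z) ^ t) + (c ^ θ * (1 - θ)) * q z) ∂μ
      = c ^ θ := by
    rw [integral_add (hT.const_mul _) (hqint.const_mul _), integral_const_mul,
      integral_const_mul, hqprob, ← hc]
    field_simp
    ring
  rw [hcalc] at hmono
  exact hmono

lemma holder_zero (hq0 : ∀ z, 0 ≤ q z) (hp0 : ∀ z, 0 ≤ p z)
    (hac : ∀ z, p z = 0 → q z = 0) (hqprob : ∫ z, q z ∂μ = 1)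
    {s t : ℝ} (hs : s < 0) (ht : 0 < t)
    (hS : Integrable (fun z => q z * (p z / q z) ^ s) μ)
    (hT : Integrable (fun z => q z * (p z / q z) ^ t) μ)
    (hGs : 0 < ∫ z, q z * (p z / q z) ^ s ∂μ)
    (hGt : 0 < ∫ z, q z * (p z / q z) ^ t ∂μ) :
    (1:ℝ) ≤ (∫ z, q z * (p z / q z) ^ s ∂μ) ^ (t / (t - s))
      * (∫ z, q z * (p z / q z) ^ t ∂μ) ^ (1 - t / (t - s)) := by
  set Gs := ∫ z, q z * (p z / q z) ^ s ∂μ with hGsdef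
  set Gt := ∫ z, q z * (p z / q z) ^ t ∂μ with hGtdef
  set l : ℝ := t / (t - s) with hldef
  have hts : 0 < t - s := by linarith
  have hl0 : 0 < l := div_pos ht hts
  have hl1 : l < 1 := by
    rw [hldef, div_lt_one hts]
    linarith
  set C := Gs ^ l * Gt ^ (1 - l) with hCdef
  have hCpos : 0 < C := by positivity
  have key : ∀ z, q z
      ≤ (C * l / Gs) * (q z * (p z / q z) ^ s) + (C * (1 - l) / Gt) * (q z * (p z / q z) ^ t) := by
    intro z
    rcases dichotomy hq0 hp0 hac z with hz | ⟨hqz, hwz⟩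
    · simp only [hz, zero_mul, mul_zero, add_zero, le_refl]
    · have h1 : ((p z / q z) ^ s) ^ l * ((p z / q z) ^ t) ^ (1 - l) = 1 := by
        rw [← Real.rpow_mul hwz.le, ← Real.rpow_mul hwz.le, ← Real.rpow_add hwz]
        have h0 : s * l + t * (1 - l) = 0 := by
          rw [hldef]
          field_simp
          ring
        rw [h0, Real.rpow_zero]
      have h2 := amgm_scaled (Real.rpow_nonneg hwz.le s) (Real.rpow_nonneg hwz.le t)
        hGs hGt hl0.le hl1.le
      rw [h1] at h2
      have h3 := mul_le_mul_of_nonneg_left h2 hqz.le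
      calc q z = q z * 1 := (mul_one _).symm
        _ ≤ q z * (Gs ^ l * Gt ^ (1 - l)
            * (l * ((p z / q z) ^ s / Gs) + (1 - l) * ((p z / q z) ^ t / Gt))) := h3
        _ = (C * l / Gs) * (q z * (p z / q z) ^ s)
            + (C * (1 - l) / Gt) * (q z * (p z / q z) ^ t) := by
            rw [hCdef]; ring
  have hIr : Integrable (fun z => (C * l / Gs) * (q z * (p z / q z) ^ s)
      + (C * (1 - l) / Gt) * (q z * (p z / q z) ^ t)) μ :=
    (hS.const_mul _).add (hT.const_mul _)
  have hmono := integral_mono (q_integrable hqprob) hIr key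
  rw [hqprob, integral_add (hS.const_mul _) (hT.const_mul _), integral_const_mul,
    integral_const_mul, ← hGsdef, ← hGtdef] at hmono
  calc (1:ℝ) ≤ C * l / Gs * Gs + C * (1 - l) / Gt * Gt := hmono
    _ = C := by field_simp; ring
    _ = _ := by rw [hCdef]

lemma jensen (hq0 : ∀ z, 0 ≤ q z) (hp0 : ∀ z, 0 ≤ p z)
    (hac : ∀ z, p z = 0 → q z = 0) (hqprob : ∫ z, q z ∂μ = 1)
    {t : ℝ}
    (hT : Integrable (fun z => q z * (p z / q z) ^ t) μ)
    (hlog : Integrable (fun z => q z * Real.log (p z / q z)) μ)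
    (hpos : 0 < ∫ z, q z * (p z / q z) ^ t ∂μ) :
    t * ∫ z, q z * Real.log (p z / q z) ∂μ ≤ Real.log (∫ z, q z * (p z / q z) ^ t ∂μ) := by
  have hqint : Integrable q μ := q_integrable hqprob
  set c := ∫ z, q z * (p z / q z) ^ t ∂μ with hc
  have key : ∀ z, t * (q z * Real.log (p z / q z)) - Real.log c * q z
      ≤ (q z * (p z / q z) ^ t) / c - q z := by
    intro z
    rcases dichotomy hq0 hp0 hac z with hz | ⟨hqz, hwz⟩
    · simp [hz]
    · have hwt : 0 < (p z / q z) ^ t := Real.rpow_pos_of_pos hwz t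
      have h1 : Real.log ((p z / q z) ^ t / c) ≤ (p z / q z) ^ t / c - 1 :=
        Real.log_le_sub_one_of_pos (div_pos hwt hpos)
      rw [Real.log_div (ne_of_gt hwt) (ne_of_gt hpos), Real.log_rpow hwz] at h1
      have h2 := mul_le_mul_of_nonneg_left h1 hqz.le
      calc t * (q z * Real.log (p z / q z)) - Real.log c * q z
          = q z * (t * Real.log (p z / q z) - Real.log c) := by ring
        _ ≤ q z * ((p z / q z) ^ t / c - 1) := h2
        _ = (q z * (p z / q z) ^ t) / c - q z := by ring
  have hIl : Integrable (fun z => t * (q z * Real.log (p z / q z)) - Real.log c * q z) μ :=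
    (hlog.const_mul t).sub (hqint.const_mul _)
  have hIr : Integrable (fun z => (q z * (p z / q z) ^ t) / c - q z) μ :=
    (hT.div_const c).sub hqint
  have hmono := integral_mono hIl hIr key
  rw [integral_sub (hlog.const_mul t) (hqint.const_mul _), integral_const_mul,
    integral_const_mul, hqprob, integral_sub (hT.div_const c) hqint, integral_div,
    hqprob, ← hc] at hmono
  have hcc : c / c = 1 := div_self (ne_of_gt hpos)
  rw [hcc] at hmono
  linarith

end Measure

end RenyiAux

-- MAIN THEOREM (to be appended)

/-- The Rényi variational bound `L_α` is continuous and non-increasing in `α` on the set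
where it is well-defined and finite (captured by positivity and integrability of the
defining integrals). Here `p z` denotes the joint density `p(y, z)` at fixed data `y`,
and `q` the variational density, with `q` absolutely continuous w.r.t. the posterior. -/
theorem renyi_bound_continuous_antitone {Z : Type*} [MeasurableSpace Z] (μ : Measure Z)
    [SigmaFinite μ] (p q : Z → ℝ)
    (hq0 : ∀ z, 0 ≤ q z) (hp0 : ∀ z, 0 ≤ p z)
    (hqmeas : Measurable q) (hpmeas : Measurable p)
    (hqprob : ∫ z, q z ∂μ = 1)
    (hac : ∀ z, p z = 0 → q z = 0)
    (L : ℝ → ℝ)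
    (hL : ∀ a : ℝ, a ≠ 1 →
      L a = (1 - a)⁻¹ * Real.log (∫ z, q z * (p z / q z) ^ (1 - a) ∂μ))
    (hL1 : L 1 = ∫ z, q z * Real.log (p z / q z) ∂μ)
    (S : Set ℝ)
    (hS : S = {a : ℝ |
      if a = 1 then Integrable (fun z => q z * Real.log (p z / q z)) μ
      else Integrable (fun z => q z * (p z / q z) ^ (1 - a)) μ ∧
        0 < ∫ z, q z * (p z / q z) ^ (1 - a) ∂μ}) :
    ContinuousOn L S ∧ AntitoneOn L S := by
  have hqint : Integrable q μ := RenyiAux.q_integrable hqprob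
  have memS : ∀ a ∈ S, a ≠ 1 →
      Integrable (fun z => q z * (p z / q z) ^ (1 - a)) μ ∧
        0 < ∫ z, q z * (p z / q z) ^ (1 - a) ∂μ := by
    intro a ha hne
    rw [hS] at ha
    simpa [mem_setOf_eq, if_neg hne] using ha
  have mem1 : (1:ℝ) ∈ S → Integrable (fun z => q z * Real.log (p z / q z)) μ := by
    intro h1
    rw [hS] at h1
    simpa using h1
  have h0T : Integrable (fun z => q z * (p z / q z) ^ (0:ℝ)) μ := RenyiAux.int_zero hqprob
  have hG0 : ∫ z, q z * (p z / q z) ^ (0:ℝ) ∂μ = 1 := RenyiAux.G_zero hqprob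
  have hmaps : MapsTo (fun a : ℝ => 1 - a) S
      {t : ℝ | Integrable (fun z => q z * (p z / q z) ^ t) μ} := by
    intro a ha
    by_cases h : a = 1
    · subst h
      show Integrable (fun z => q z * (p z / q z) ^ ((1:ℝ) - 1)) μ
      simpa using h0T
    · exact (memS a ha h).1
  -- expression of L via phi and the difference quotient integral
  have hLphi : ∀ a ∈ S, a ≠ 1 → L a =
      RenyiAux.phi (∫ z, q z * (p z / q z) ^ (1 - a) ∂μ)
        * ∫ z, (q z * (p z / q z) ^ (1 - a) - q z) / (1 - a) ∂μ := by
    intro a ha hne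
    obtain ⟨hTa, hpos⟩ := memS a ha hne
    have htne : (1:ℝ) - a ≠ 0 := sub_ne_zero.mpr (Ne.symm hne)
    have hK : ∫ z, (q z * (p z / q z) ^ (1 - a) - q z) / (1 - a) ∂μ
        = ((∫ z, q z * (p z / q z) ^ (1 - a) ∂μ) - 1) / (1 - a) := by
      rw [integral_div, integral_sub hTa hqint, hqprob]
    rw [hL a hne, hK]
    set g := ∫ z, q z * (p z / q z) ^ (1 - a) ∂μ with hg
    by_cases hg1 : g = 1
    · simp [RenyiAux.phi, hg1]
    · simp only [RenyiAux.phi, if_neg hg1]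
      rw [inv_mul_eq_div, div_mul_div_comm, mul_comm (g - 1) (1 - a),
        mul_div_mul_right _ _ (sub_ne_zero.mpr hg1)]
  constructor
  · -- Continuity
    intro a0 ha0
    by_cases h1 : a0 = 1
    · -- continuity at the point 1
      subst h1
      have hint : Integrable (fun z => q z * Real.log (p z / q z)) μ := mem1 ha0
      have piece_lt : ContinuousWithinAt L (S ∩ Iio 1) 1 := by
        rcases eq_empty_or_nonempty (S ∩ Iio 1) with he | ⟨b, hbS, hb⟩
        · rw [he]
          show Tendsto L (𝓝[(∅ : Set ℝ)] 1) (𝓝 (L 1))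
          rw [nhdsWithin_empty]
          exact tendsto_bot
        · have hbne : b ≠ 1 := ne_of_lt hb
          have ht2pos : 0 < 1 - b := sub_pos.mpr hb
          have ht2T := (memS b hbS hbne).1
          have hmapsto2 : MapsTo (fun a : ℝ => 1 - a) (S ∩ Iio 1)
              ({t : ℝ | Integrable (fun z => q z * (p z / q z) ^ t) μ} ∩ Ioi 0) :=
            fun a ha => ⟨hmaps ha.1, by simp only [mem_Ioi]; have := ha.2; simp only [mem_Iio] at this; linarith⟩
          have hmt : Tendsto (fun a : ℝ => 1 - a) (𝓝[S ∩ Iio 1] 1)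
              (𝓝[{t : ℝ | Integrable (fun z => q z * (p z / q z) ^ t) μ} ∩ Ioi 0] 0) := by
            have h := ((continuous_const.sub continuous_id).continuousWithinAt
              (s := S ∩ Iio 1) (x := (1:ℝ))).tendsto_nhdsWithin hmapsto2
            simpa [Pi.sub_def] using h
          have hle : 𝓝[{t : ℝ | Integrable (fun z => q z * (p z / q z) ^ t) μ} ∩ Ioi 0] (0:ℝ)
              ≤ 𝓝[Ioc 0 (1 - b)] 0 := by
            have heq : 𝓝[{t : ℝ | Integrable (fun z => q z * (p z / q z) ^ t) μ} ∩ Ioi 0] (0:ℝ)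
                = 𝓝[({t : ℝ | Integrable (fun z => q z * (p z / q z) ^ t) μ} ∩ Ioi 0) ∩ Iio (1 - b)] 0 :=
              (nhdsWithin_inter_of_mem' (mem_nhdsWithin_of_mem_nhds (Iio_mem_nhds ht2pos))).symm
            rw [heq]
            exact nhdsWithin_mono _ fun u hu => ⟨hu.1.2, le_of_lt hu.2⟩
          have hK := RenyiAux.K_tendsto_right hq0 hp0 hqmeas hpmeas hac hqprob ht2pos ht2T hint
          have hGt : Tendsto (fun t => ∫ z, q z * (p z / q z) ^ t ∂μ) (𝓝[Ioc 0 (1 - b)] 0)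
              (𝓝 1) := by
            have h := RenyiAux.G_tendsto_Icc hq0 hp0 hqmeas hpmeas hac
              (le_refl (0:ℝ)) ht2pos.le h0T ht2T
            rw [hG0] at h
            exact h.mono_left (nhdsWithin_mono _ Ioc_subset_Icc_self)
          have hφG := RenyiAux.phi_tendsto.comp hGt
          have hmain : Tendsto (fun t => RenyiAux.phi (∫ z, q z * (p z / q z) ^ t ∂μ)
              * ∫ z, (q z * (p z / q z) ^ t - q z) / t ∂μ) (𝓝[Ioc 0 (1 - b)] 0)
              (𝓝 (∫ z, q z * Real.log (p z / q z) ∂μ)) := by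
            simpa using hφG.mul hK
          have hcomp := hmain.comp (hmt.mono_right hle)
          have hfin : Tendsto L (𝓝[S ∩ Iio 1] 1) (𝓝 (∫ z, q z * Real.log (p z / q z) ∂μ)) := by
            refine hcomp.congr' ?_
            filter_upwards [self_mem_nhdsWithin] with a ha
            exact (hLphi a ha.1 (ne_of_lt ha.2)).symm
          rw [← hL1] at hfin
          exact hfin
      have piece_gt : ContinuousWithinAt L (S ∩ Ioi 1) 1 := by
        rcases eq_empty_or_nonempty (S ∩ Ioi 1) with he | ⟨b, hbS, hb⟩
        · rw [he]
          show Tendsto L (𝓝[(∅ : Set ℝ)] 1) (𝓝 (L 1))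
          rw [nhdsWithin_empty]
          exact tendsto_bot
        · have hbne : b ≠ 1 := ne_of_gt hb
          have ht1neg : 1 - b < 0 := sub_neg.mpr hb
          have ht1T := (memS b hbS hbne).1
          have hmapsto2 : MapsTo (fun a : ℝ => 1 - a) (S ∩ Ioi 1)
              ({t : ℝ | Integrable (fun z => q z * (p z / q z) ^ t) μ} ∩ Iio 0) :=
            fun a ha => ⟨hmaps ha.1, by simp only [mem_Iio]; have := ha.2; simp only [mem_Ioi] at this; linarith⟩
          have hmt : Tendsto (fun a : ℝ => 1 - a) (𝓝[S ∩ Ioi 1] 1)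
              (𝓝[{t : ℝ | Integrable (fun z => q z * (p z / q z) ^ t) μ} ∩ Iio 0] 0) := by
            have h := ((continuous_const.sub continuous_id).continuousWithinAt
              (s := S ∩ Ioi 1) (x := (1:ℝ))).tendsto_nhdsWithin hmapsto2
            simpa [Pi.sub_def] using h
          have hle : 𝓝[{t : ℝ | Integrable (fun z => q z * (p z / q z) ^ t) μ} ∩ Iio 0] (0:ℝ)
              ≤ 𝓝[Ico (1 - b) 0] 0 := by
            have heq : 𝓝[{t : ℝ | Integrable (fun z => q z * (p z / q z) ^ t) μ} ∩ Iio 0] (0:ℝ)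
                = 𝓝[({t : ℝ | Integrable (fun z => q z * (p z / q z) ^ t) μ} ∩ Iio 0) ∩ Ioi (1 - b)] 0 :=
              (nhdsWithin_inter_of_mem' (mem_nhdsWithin_of_mem_nhds (Ioi_mem_nhds ht1neg))).symm
            rw [heq]
            exact nhdsWithin_mono _ fun u hu => ⟨le_of_lt hu.2, hu.1.2⟩
          have hK := RenyiAux.K_tendsto_left hq0 hp0 hqmeas hpmeas hac hqprob ht1neg ht1T hint
          have hGt : Tendsto (fun t => ∫ z, q z * (p z / q z) ^ t ∂μ) (𝓝[Ico (1 - b) 0] 0)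
              (𝓝 1) := by
            have h := RenyiAux.G_tendsto_Icc hq0 hp0 hqmeas hpmeas hac
              ht1neg.le (le_refl (0:ℝ)) ht1T h0T
            rw [hG0] at h
            exact h.mono_left (nhdsWithin_mono _ Ico_subset_Icc_self)
          have hφG := RenyiAux.phi_tendsto.comp hGt
          have hmain : Tendsto (fun t => RenyiAux.phi (∫ z, q z * (p z / q z) ^ t ∂μ)
              * ∫ z, (q z * (p z / q z) ^ t - q z) / t ∂μ) (𝓝[Ico (1 - b) 0] 0)
              (𝓝 (∫ z, q z * Real.log (p z / q z) ∂μ)) := by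
            simpa using hφG.mul hK
          have hcomp := hmain.comp (hmt.mono_right hle)
          have hfin : Tendsto L (𝓝[S ∩ Ioi 1] 1) (𝓝 (∫ z, q z * Real.log (p z / q z) ∂μ)) := by
            refine hcomp.congr' ?_
            filter_upwards [self_mem_nhdsWithin] with a ha
            exact (hLphi a ha.1 (ne_of_gt ha.2)).symm
          rw [← hL1] at hfin
          exact hfin
      have hsub : S ⊆ ((S ∩ Iio 1) ∪ {1}) ∪ (S ∩ Ioi 1) := by
        intro a ha
        rcases lt_trichotomy a 1 with h | h | h
        · exact Or.inl (Or.inl ⟨ha, h⟩)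
        · exact Or.inl (Or.inr h)
        · exact Or.inr ⟨ha, h⟩
      exact ((piece_lt.union continuousWithinAt_singleton).union piece_gt).mono hsub
    · -- continuity at a point `a0 ≠ 1`
      obtain ⟨hTa, hpos⟩ := memS a0 ha0 h1
      have hGcwa := RenyiAux.G_cwa hq0 hp0 hqmeas hpmeas hac hTa
      have hmcwa : ContinuousWithinAt (fun a : ℝ => 1 - a) S a0 :=
        (continuous_const.sub continuous_id).continuousWithinAt
      have hcomp : ContinuousWithinAt
          (fun a => ∫ z, q z * (p z / q z) ^ (1 - a) ∂μ) S a0 :=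
        hGcwa.comp hmcwa hmaps
      have hlogc : ContinuousWithinAt
          (fun a => Real.log (∫ z, q z * (p z / q z) ^ (1 - a) ∂μ)) S a0 :=
        hcomp.log (ne_of_gt hpos)
      have hinv : ContinuousWithinAt (fun a : ℝ => (1 - a)⁻¹) S a0 :=
        ((continuous_const.sub continuous_id).continuousWithinAt).inv₀
          (sub_ne_zero.mpr (Ne.symm h1))
      have hM := hinv.mul hlogc
      refine hM.congr_of_eventuallyEq ?_ ?_
      · filter_upwards [mem_nhdsWithin_of_mem_nhds (isOpen_ne.mem_nhds h1)] with a ha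
        exact hL a ha
      · exact hL a0 h1
  · -- Antitonicity
    intro a haS b hbS hab
    rcases hab.eq_or_lt with rfl | hlt
    · exact le_refl _
    by_cases ha1 : a = 1
    · subst ha1
      have hint := mem1 haS
      have hbne : b ≠ 1 := ne_of_gt hlt
      obtain ⟨hTb, hGb⟩ := memS b hbS hbne
      have hsneg : 1 - b < 0 := by linarith
      have hj := RenyiAux.jensen hq0 hp0 hac hqprob hTb hint hGb
      rw [hL b hbne, hL1, inv_mul_eq_div, div_le_iff_of_neg hsneg]
      linarith
    · by_cases hb1 : b = 1
      · subst hb1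
        have hint := mem1 hbS
        obtain ⟨hTa', hGa⟩ := memS a haS ha1
        have htpos : 0 < 1 - a := by linarith
        have hj := RenyiAux.jensen hq0 hp0 hac hqprob hTa' hint hGa
        rw [hL1, hL a ha1, inv_mul_eq_div, le_div_iff₀ htpos]
        linarith
      · obtain ⟨hTa', hGa⟩ := memS a haS ha1
        obtain ⟨hTb', hGb⟩ := memS b hbS hb1
        rw [hL a ha1, hL b hb1, inv_mul_eq_div, inv_mul_eq_div]
        set s : ℝ := 1 - b with hsdef
        set t : ℝ := 1 - a with htdef
        set A : ℝ := Real.log (∫ z, q z * (p z / q z) ^ s ∂μ) with hAdef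
        set B : ℝ := Real.log (∫ z, q z * (p z / q z) ^ t ∂μ) with hBdef
        have hst : s < t := by rw [hsdef, htdef]; linarith
        rcases lt_trichotomy b 1 with hb | hb | hb
        · -- 0 < s < t
          have hs0 : 0 < s := by rw [hsdef]; linarith
          have ht0 : 0 < t := lt_trans hs0 hst
          have hθ0 : 0 < s / t := div_pos hs0 ht0
          have hθ1 : s / t < 1 := (div_lt_one ht0).mpr hst
          have hpm := RenyiAux.powmean hq0 hp0 hac hqprob (ne_of_gt ht0) hθ0 hθ1
            (div_mul_cancel₀ s ht0.ne').symm hTa' hTb' hGa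
          have hlogle : A ≤ (s / t) * B := by
            rw [hAdef, hBdef, ← Real.log_rpow hGa]
            exact (Real.log_le_log_iff hGb (Real.rpow_pos_of_pos hGa _)).mpr hpm
          rw [div_le_div_iff₀ hs0 ht0]
          have hmul := mul_le_mul_of_nonneg_right hlogle ht0.le
          have heq : s / t * B * t = B * s := by
            calc s / t * B * t = B * (s / t * t) := by ring
              _ = B * s := by rw [div_mul_cancel₀ s ht0.ne']
          rw [← heq]
          exact hmul
        · exact absurd hb hb1
        · rcases lt_or_gt_of_ne ha1 with ha | ha
          · -- mixed case s < 0 < t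
            have hs0 : s < 0 := by rw [hsdef]; linarith
            have ht0 : 0 < t := by rw [htdef]; linarith
            have hts : 0 < t - s := by linarith
            have hh := RenyiAux.holder_zero hq0 hp0 hac hqprob hs0 ht0 hTb' hTa' hGb hGa
            have hlognn : 0 ≤ (t / (t - s)) * A + (1 - t / (t - s)) * B := by
              have h0 := Real.log_nonneg hh
              rw [Real.log_mul (ne_of_gt (Real.rpow_pos_of_pos hGb _))
                (ne_of_gt (Real.rpow_pos_of_pos hGa _)), Real.log_rpow hGb,
                Real.log_rpow hGa] at h0
              linarith
            have h1' : (t / (t - s)) * (t - s) = t := div_mul_cancel₀ t hts.ne'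
            have h2' : (1 - t / (t - s)) * (t - s) = -s := by
              have : (1 - t / (t - s)) * (t - s) = (t - s) - (t / (t - s)) * (t - s) := by ring
              rw [this, h1']
              ring
            have key : s * B ≤ t * A := by
              have h3 := mul_nonneg hlognn hts.le
              have h4 : (t / (t - s) * A + (1 - t / (t - s)) * B) * (t - s)
                  = t * A + -s * B := by
                calc (t / (t - s) * A + (1 - t / (t - s)) * B) * (t - s)
                    = A * (t / (t - s) * (t - s)) + B * ((1 - t / (t - s)) * (t - s)) := by
                      ring
                  _ = A * t + B * (-s) := by rw [h1', h2']
                  _ = t * A + -s * B := by ring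
              rw [h4] at h3
              linarith
            have hdiff : A / s - B / t = (t * A - s * B) / (s * t) := by
              rw [div_sub_div _ _ hs0.ne ht0.ne', mul_comm t A, mul_comm s B]
            have hdenom : s * t < 0 := mul_neg_of_neg_of_pos hs0 ht0
            have hfrac : (t * A - s * B) / (s * t) ≤ 0 :=
              div_nonpos_iff.mpr (Or.inl ⟨by linarith, hdenom.le⟩)
            linarith [hdiff ▸ hfrac]
          · -- s < t < 0
            have ht0 : t < 0 := by rw [htdef]; linarith
            have hs0 : s < 0 := lt_trans hst ht0
            have hθ0 : 0 < t / s := div_pos_iff.mpr (Or.inr ⟨ht0, hs0⟩)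
            have hθ1 : t / s < 1 := (div_lt_one_of_neg hs0).mpr hst
            have hpm := RenyiAux.powmean hq0 hp0 hac hqprob (ne_of_lt hs0) hθ0 hθ1
              (div_mul_cancel₀ t hs0.ne).symm hTb' hTa' hGb
            have hlogle : B ≤ (t / s) * A := by
              rw [hAdef, hBdef, ← Real.log_rpow hGb]
              exact (Real.log_le_log_iff hGa (Real.rpow_pos_of_pos hGb _)).mpr hpm
            have key : t * A ≤ s * B := by
              have hmul := mul_le_mul_of_nonpos_right hlogle hs0.le
              have heq : t / s * A * s = t * A := by
                calc t / s * A * s = A * (t / s * s) := by ring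
                  _ = t * A := by rw [div_mul_cancel₀ t hs0.ne]; ring
              rw [← heq]
              exact hmul.trans_eq (mul_comm B s)
            have hdiff : A / s - B / t = (t * A - s * B) / (s * t) := by
              rw [div_sub_div _ _ hs0.ne ht0.ne, mul_comm t A, mul_comm s B]
            have hdenom : 0 < s * t := mul_pos_of_neg_of_neg hs0 ht0
            have hfrac : (t * A - s * B) / (s * t) ≤ 0 :=
              div_nonpos_iff.mpr (Or.inr ⟨by linarith, hdenom.le⟩)
            linarith [hdiff ▸ hfrac]
end

section
/- In Bayesian linear regression with 2-dimensional Gaussian posterior p(θ|x,y) = N(μ, Σ), minimizing the Rényi divergence of order α from a factorized Gaussian q(θ) = N(μ_1, λ_1^{-1}) ⊗ N(μ_2, λ_2^{-1}) yields a first-coordinate precision λ_1 = ρ_α / Σ_11 (equivalently the variance scales as Σ_11/ρ_α) where ρ_α = (1/(2α))[(2α−1) + sqrt(1 − 4α(1−α)Σ_12²/(Σ_11 Σ_22))], and the scaling factor ρ_α is non-decreasing in α on the set of α where the square root is real. -/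
open Real Set

theorem renyi_aux (c a b sa sb : ℝ) (hc0 : 0 ≤ c) (hc1 : c < 1)
    (ha0 : 0 < a) (hb0 : 0 < b) (hab : a ≤ b)
    (hsa0 : 0 ≤ sa) (hsb0 : 0 ≤ sb)
    (hsa2 : sa ^ 2 = 1 - 4 * a * (1 - a) * c)
    (hsb2 : sb ^ 2 = 1 - 4 * b * (1 - b) * c) :
    2 * b * sa - 2 * a * sb ≤ 2 * b - 2 * a := by
  have hla : 1 - 2 * a * c ≤ sa := by
    rcases le_or_gt (1 - 2 * a * c) 0 with h | h
    · linarith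
    · have h2 : (1 - 2 * a * c) ^ 2 ≤ sa ^ 2 := by
        rw [hsa2]
        nlinarith [mul_nonneg (mul_nonneg (sq_nonneg a) hc0) (sub_pos.mpr hc1).le]
      nlinarith [h2, hsa0, h]
  have hlb : 1 - 2 * b * c ≤ sb := by
    rcases le_or_gt (1 - 2 * b * c) 0 with h | h
    · linarith
    · have h2 : (1 - 2 * b * c) ^ 2 ≤ sb ^ 2 := by
        rw [hsb2]
        nlinarith [mul_nonneg (mul_nonneg (sq_nonneg b) hc0) (sub_pos.mpr hc1).le]
      nlinarith [h2, hsb0, h]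
  have hsapos : 0 < sa := by nlinarith [sq_nonneg (2 * a - 1), hsa0, hsa2]
  have hsbpos : 0 < sb := by nlinarith [sq_nonneg (2 * b - 1), hsb0, hsb2]
  have hD : 0 < 2 * b * sa + 2 * a * sb := by positivity
  have hDlow : 2 * a + 2 * b - 8 * a * b * c ≤ 2 * b * sa + 2 * a * sb := by
    nlinarith [mul_le_mul_of_nonneg_left hla (by linarith : (0:ℝ) ≤ 2 * b),
      mul_le_mul_of_nonneg_left hlb (by linarith : (0:ℝ) ≤ 2 * a)]
  have hprod : (2 * b * sa - 2 * a * sb) * (2 * b * sa + 2 * a * sb)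
      = 4 * (b - a) * (a + b - 4 * a * b * c) := by
    have e : (2 * b * sa - 2 * a * sb) * (2 * b * sa + 2 * a * sb)
        = 4 * b ^ 2 * sa ^ 2 - 4 * a ^ 2 * sb ^ 2 := by ring
    rw [e, hsa2, hsb2]; ring
  have h1 : (2 * b * sa - 2 * a * sb) * (2 * b * sa + 2 * a * sb)
      ≤ (2 * b - 2 * a) * (2 * b * sa + 2 * a * sb) := by
    rw [hprod]
    nlinarith [mul_nonneg (sub_nonneg.mpr hab) (sub_nonneg.mpr hDlow)]
  exact le_of_mul_le_mul_right h1 hD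

/-- In Bayesian linear regression with a 2×2 positive-definite posterior covariance `Σ`,
the Rényi-optimal factorized Gaussian has first-coordinate precision `λ₁ = ρ_α/Σ₁₁`
with `ρ_α = (1/(2α))[(2α−1) + √(1 − 4α(1−α)Σ₁₂²/(Σ₁₁Σ₂₂))]`; the scaling factor
`ρ_α` is non-decreasing in `α` on the set of `α ∈ (0,1]` where the square root is
real (i.e. the expression under it is nonnegative). -/
theorem renyi_blr_scaling_monotone (S11 S22 S12 : ℝ)
    (h11 : 0 < S11) (h22 : 0 < S22) (hpd : S12 ^ 2 < S11 * S22) :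
    MonotoneOn
      (fun α : ℝ =>
        (2 * α)⁻¹ * ((2 * α - 1) + Real.sqrt (1 - 4 * α * (1 - α) * (S12 ^ 2 / (S11 * S22)))))
      {α : ℝ | α ∈ Ioc (0 : ℝ) 1 ∧ 0 ≤ 1 - 4 * α * (1 - α) * (S12 ^ 2 / (S11 * S22))} := by
  intro a ha b hb hab
  obtain ⟨⟨ha0, ha1⟩, hua⟩ := ha
  obtain ⟨⟨hb0, hb1⟩, hub⟩ := hb
  have hSS : (0:ℝ) < S11 * S22 := mul_pos h11 h22
  have hc0 : 0 ≤ S12 ^ 2 / (S11 * S22) := div_nonneg (sq_nonneg _) hSS.le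
  have hc1 : S12 ^ 2 / (S11 * S22) < 1 := (div_lt_one hSS).mpr hpd
  have key := renyi_aux (S12 ^ 2 / (S11 * S22)) a b
    (Real.sqrt (1 - 4 * a * (1 - a) * (S12 ^ 2 / (S11 * S22))))
    (Real.sqrt (1 - 4 * b * (1 - b) * (S12 ^ 2 / (S11 * S22))))
    hc0 hc1 ha0 hb0 hab (Real.sqrt_nonneg _) (Real.sqrt_nonneg _)
    (Real.sq_sqrt hua) (Real.sq_sqrt hub)
  simp only
  rw [inv_mul_eq_div, inv_mul_eq_div,
    div_le_div_iff₀ (by linarith : (0:ℝ) < 2 * a) (by linarith : (0:ℝ) < 2 * b)]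
  nlinarith [key]
end
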